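/- Let E_1, ..., E_N (with N ≥ 1) and F be real inner product spaces, and let E = (E_1 × ⋯ × E_N) × F be their product, equipped with the product inner product. Let L : E → ℝ be differentiable at a point ω, with gradient ∇L(ω) = G = ((g_1, ..., g_N), g_θ), where g_j ∈ E_j and g_θ ∈ F. Let Ḡ = ((ḡ_1, ..., ḡ_N), 0) with ḡ_j ∈ E_j, and define the augmented gradient Ĝ = G + Ḡ = ((g_1 + ḡ_1, ..., g_N + ḡ_N), g_θ). If ⟨g_j, ḡ_j⟩ > 0 for all j with 1 ≤ j ≤ N, then Ĝ is a descent direction for L at ω: there exists ᾱ > 0 such that for all α with 0 < α < ᾱ, L(ω − α • Ĝ) < L(ω). -/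

import Mathlib

/-! The directional derivative of `L` at `ω` along `Ĝ` is `⟪G, Ĝ⟫ = ‖G‖² + ∑ j, ⟪g j, ḡ j⟫ > 0`,
so `α ↦ L (ω - α • Ĝ)` has negative derivative at `0` and decreases for small `α > 0`. -/

open scoped RealInnerProductSpace

open Filter Set Topology

theorem HasDerivWithinAt.eventually_lt_of_neg {f : ℝ → ℝ} {f' x : ℝ}
    (hf : HasDerivWithinAt f f' (Ioi x) x) (hf' : f' < 0) :
    ∀ᶠ t in 𝓝[>] x, f t < f x := by
  have hslope : ∀ᶠ t in 𝓝[>] x, slope f x t < 0 :=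
    (hasDerivWithinAt_iff_tendsto_slope' (lt_irrefl x)).mp hf |>.eventually (gt_mem_nhds hf')
  filter_upwards [hslope, self_mem_nhdsWithin] with t ht (hxt : x < t)
  rw [slope_def_field, div_lt_iff₀ (sub_pos.mpr hxt), zero_mul] at ht
  exact sub_neg.mp ht

theorem HasFDerivAt.eventually_sub_smul_lt {E : Type*} [NormedAddCommGroup E] [NormedSpace ℝ E]
    {f : E → ℝ} {f' : E →L[ℝ] ℝ} {x d : E} (hf : HasFDerivAt f f' x) (hd : 0 < f' d) :
    ∀ᶠ α in 𝓝[>] (0 : ℝ), f (x - α • d) < f x := by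
  have hpath : HasDerivAt (fun α : ℝ => x - α • d) (-d) 0 := by
    simpa using ((hasDerivAt_id (0 : ℝ)).smul_const d).const_sub x
  have hcomp : HasDerivAt (fun α : ℝ => f (x - α • d)) (-f' d) 0 := by
    have hf0 : HasFDerivAt f f' (x - (0 : ℝ) • d) := by simpa using hf
    simpa [Function.comp_def] using hf0.comp_hasDerivAt 0 hpath
  simpa using hcomp.hasDerivWithinAt.eventually_lt_of_neg (neg_neg_iff_pos.mpr hd)

/-- Let `E = (E₁ × ⋯ × E_N) ×₂ F` (with `N ≥ 1`) be an `L²`-product of real inner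
product spaces, and let `L : E → ℝ` be differentiable at `ω` with gradient
`G = ((g 0, …, g (N-1)), gθ)` (i.e. its Fréchet derivative at `ω` is `h ↦ ⟪G, h⟫`).
Let `Ḡ = ((ḡ 0, …, ḡ (N-1)), 0)` and let `Ĝ = G + Ḡ` be the augmented gradient.
If `⟪g j, ḡ j⟫ > 0` for every `j`, then `Ĝ` is a descent direction for `L` at `ω`:
there exists `ᾱ > 0` such that `L (ω - α • Ĝ) < L ω` for all `0 < α < ᾱ`. -/
theorem augmented_gradient_descent_direction
    {N : ℕ} (hN : 1 ≤ N)
    (E₁ : Fin N → Type*) [∀ j, NormedAddCommGroup (E₁ j)]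
    [∀ j, InnerProductSpace ℝ (E₁ j)]
    (F : Type*) [NormedAddCommGroup F] [InnerProductSpace ℝ F]
    (L : WithLp 2 ((PiLp 2 E₁) × F) → ℝ)
    (ω : WithLp 2 ((PiLp 2 E₁) × F))
    (g gbar : ∀ j, E₁ j) (gθ : F)
    (G Gbar Ghat : WithLp 2 ((PiLp 2 E₁) × F))
    (hG : G = (WithLp.equiv 2 ((PiLp 2 E₁) × F)).symm
        ((WithLp.equiv 2 (∀ j, E₁ j)).symm g, gθ))
    (hGbar : Gbar = (WithLp.equiv 2 ((PiLp 2 E₁) × F)).symm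
        ((WithLp.equiv 2 (∀ j, E₁ j)).symm gbar, 0))
    (hGhat : Ghat = G + Gbar)
    (hL : HasFDerivAt L (innerSL ℝ G) ω)
    (hpos : ∀ j, 0 < ⟪g j, gbar j⟫) :
    ∃ ᾱ : ℝ, 0 < ᾱ ∧ ∀ α : ℝ, 0 < α → α < ᾱ → L (ω - α • Ghat) < L ω := by
  have hcross : ⟪G, Gbar⟫ = ∑ j, ⟪g j, gbar j⟫ := by
    simp [hG, hGbar, WithLp.prod_inner_apply, PiLp.inner_apply]
  have hcross_pos : 0 < ⟪G, Gbar⟫ := by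
    have : Nonempty (Fin N) := Fin.pos_iff_nonempty.mp hN
    exact hcross ▸ Finset.sum_pos (fun j _ => hpos j) Finset.univ_nonempty
  have hslope : 0 < innerSL ℝ G Ghat := by
    rw [innerSL_apply_apply, hGhat, inner_add_right, real_inner_self_eq_norm_sq]
    positivity
  obtain ⟨ᾱ, hᾱ, hdescent⟩ :=
    mem_nhdsGT_iff_exists_Ioo_subset.mp (hL.eventually_sub_smul_lt hslope)
  exact ⟨ᾱ, hᾱ, fun α h₀ h₁ => hdescent ⟨h₀, h₁⟩⟩
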